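/- Let H be a ≤-hypergroupoid and A a nonempty subset of H such that the characteristic function f_A is a fuzzy semiprime ideal of H. Then A is a semiprime ideal of H. -/

import Mathlib

/-- The induced operation `A*B = ⋃_{(a,b) ∈ A×B} a∘b` on subsets of a hypergroupoid. -/
def hProd {H : Type*} (circ : H → H → Set H) (A B : Set H) : Set H :=
  {x | ∃ a ∈ A, ∃ b ∈ B, x ∈ circ a b}

/-- A (nonempty) subset `A` is a left ideal of the ≤-hypergroupoid:
`H*A ⊆ A` and `A` is downward closed under `le`. -/
def IsLeftIdeal {H : Type*} (circ : H → H → Set H) (le : H → H → Prop) (A : Set H) : Prop :=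
  A.Nonempty ∧ hProd circ Set.univ A ⊆ A ∧ ∀ a ∈ A, ∀ b : H, le b a → b ∈ A

def IsRightIdeal {H : Type*} (circ : H → H → Set H) (le : H → H → Prop) (A : Set H) : Prop :=
  A.Nonempty ∧ hProd circ A Set.univ ⊆ A ∧ ∀ a ∈ A, ∀ b : H, le b a → b ∈ A

def IsIdeal {H : Type*} (circ : H → H → Set H) (le : H → H → Prop) (A : Set H) : Prop :=
  IsLeftIdeal circ le A ∧ IsRightIdeal circ le A

def IsSubgroupoid {H : Type*} (circ : H → H → Set H) (A : Set H) : Prop :=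
  A.Nonempty ∧ hProd circ A A ⊆ A

def IsPrimeSubset {H : Type*} (circ : H → H → Set H) (I : Set H) : Prop :=
  I.Nonempty ∧ (∀ a b : H, circ a b ⊆ I → a ∈ I ∨ b ∈ I) ∧
    (∀ a b : H, circ a b ⊆ I ∨ circ a b ∩ I = ∅)

def IsPrimeIdeal {H : Type*} (circ : H → H → Set H) (le : H → H → Prop) (A : Set H) : Prop :=
  IsIdeal circ le A ∧ IsPrimeSubset circ A

def IsSemiprimeSubset {H : Type*} (circ : H → H → Set H) (I : Set H) : Prop :=
  I.Nonempty ∧ (∀ a : H, circ a a ⊆ I → a ∈ I) ∧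
    (∀ a : H, circ a a ⊆ I ∨ circ a a ∩ I = ∅)

def IsSemiprimeIdeal {H : Type*} (circ : H → H → Set H) (le : H → H → Prop) (A : Set H) : Prop :=
  IsIdeal circ le A ∧ IsSemiprimeSubset circ A

/-- A fuzzy subset of `H` is a map into `[0,1]`. -/
def IsFuzzySubset {H : Type*} (f : H → ℝ) : Prop := ∀ x, f x ∈ Set.Icc (0 : ℝ) 1

open Classical in
/-- The characteristic function of a subset. -/
noncomputable def charFun {H : Type*} (A : Set H) : H → ℝ := fun x => if x ∈ A then 1 else 0

def FuzzyLeftIdeal {H : Type*} (circ : H → H → Set H) (le : H → H → Prop) (f : H → ℝ) : Prop :=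
  (∀ x y : H, le x y → f y ≤ f x) ∧ ∀ x y : H, ∀ u ∈ circ x y, f y ≤ f u

def FuzzyRightIdeal {H : Type*} (circ : H → H → Set H) (le : H → H → Prop) (f : H → ℝ) : Prop :=
  (∀ x y : H, le x y → f y ≤ f x) ∧ ∀ x y : H, ∀ u ∈ circ x y, f x ≤ f u

def FuzzyIdeal {H : Type*} (circ : H → H → Set H) (le : H → H → Prop) (f : H → ℝ) : Prop :=
  FuzzyLeftIdeal circ le f ∧ FuzzyRightIdeal circ le f

def FuzzyPrimeSubset {H : Type*} (circ : H → H → Set H) (f : H → ℝ) : Prop :=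
  ∀ x y : H, ∀ u ∈ circ x y, f u ≤ max (f x) (f y)

def FuzzyPrimeIdeal {H : Type*} (circ : H → H → Set H) (le : H → H → Prop) (f : H → ℝ) : Prop :=
  FuzzyIdeal circ le f ∧ FuzzyPrimeSubset circ f

def FuzzySemiprimeSubset {H : Type*} (circ : H → H → Set H) (f : H → ℝ) : Prop :=
  ∀ x : H, ∀ u ∈ circ x x, f u ≤ f x

def FuzzySemiprimeIdeal {H : Type*} (circ : H → H → Set H) (le : H → H → Prop) (f : H → ℝ) : Prop :=
  FuzzyIdeal circ le f ∧ FuzzySemiprimeSubset circ f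

section CharFun

variable {H : Type*} {A : Set H}

lemma charFun_le_charFun_iff {x y : H} : charFun A x ≤ charFun A y ↔ (x ∈ A → y ∈ A) := by
  by_cases hx : x ∈ A <;> by_cases hy : y ∈ A <;> simp [charFun, hx, hy]

lemma mem_of_charFun_le {x y : H} (hx : x ∈ A) (h : charFun A x ≤ charFun A y) : y ∈ A :=
  charFun_le_charFun_iff.1 h hx

variable {circ : H → H → Set H} {le : H → H → Prop}

lemma downwardClosed_of_charFun (h : ∀ x y : H, le x y → charFun A y ≤ charFun A x) :
    ∀ a ∈ A, ∀ b : H, le b a → b ∈ A :=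
  fun a ha b hba => mem_of_charFun_le ha (h b a hba)

lemma FuzzyLeftIdeal.isLeftIdeal_of_charFun (h : FuzzyLeftIdeal circ le (charFun A))
    (hA : A.Nonempty) : IsLeftIdeal circ le A := by
  refine ⟨hA, ?_, downwardClosed_of_charFun h.1⟩
  rintro x ⟨a, -, b, hb, hx⟩
  exact mem_of_charFun_le hb (h.2 a b x hx)

lemma FuzzyRightIdeal.isRightIdeal_of_charFun (h : FuzzyRightIdeal circ le (charFun A))
    (hA : A.Nonempty) : IsRightIdeal circ le A := by
  refine ⟨hA, ?_, downwardClosed_of_charFun h.1⟩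
  rintro x ⟨a, ha, b, -, hx⟩
  exact mem_of_charFun_le ha (h.2 a b x hx)

lemma FuzzyIdeal.isIdeal_of_charFun (h : FuzzyIdeal circ le (charFun A)) (hA : A.Nonempty) :
    IsIdeal circ le A :=
  ⟨h.1.isLeftIdeal_of_charFun hA, h.2.isRightIdeal_of_charFun hA⟩

lemma FuzzySemiprimeSubset.mem_of_inter_nonempty_charFun
    (h : FuzzySemiprimeSubset circ (charFun A)) {a : H} (ha : (circ a a ∩ A).Nonempty) :
    a ∈ A :=
  let ⟨u, hu, huA⟩ := ha
  mem_of_charFun_le huA (h a u hu)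

lemma FuzzySemiprimeSubset.isSemiprimeSubset_of_charFun
    (h : FuzzySemiprimeSubset circ (charFun A)) (hne : ∀ a : H, (circ a a).Nonempty)
    (hA : A.Nonempty) (hright : hProd circ A Set.univ ⊆ A) : IsSemiprimeSubset circ A := by
  refine ⟨hA, fun a hsub => h.mem_of_inter_nonempty_charFun ?_, fun a => ?_⟩
  · obtain ⟨u, hu⟩ := hne a
    exact ⟨u, hu, hsub hu⟩
  · rcases (circ a a ∩ A).eq_empty_or_nonempty with hempty | hmeets
    · exact Or.inr hempty
    · have haA := h.mem_of_inter_nonempty_charFun hmeets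
      exact Or.inl fun v hv => hright ⟨a, haA, a, trivial, hv⟩

end CharFun

theorem stmt_18_general {H : Type*} (circ : H → H → Set H)
    (hne : ∀ a b : H, (circ a b).Nonempty) (le : H → H → Prop)
    (A : Set H) (hA : A.Nonempty)
    (h : FuzzySemiprimeIdeal circ le (charFun A)) :
    IsSemiprimeIdeal circ le A := by
  have hideal : IsIdeal circ le A := h.1.isIdeal_of_charFun hA
  obtain ⟨-, hright, -⟩ := hideal.2
  exact ⟨hideal, h.2.isSemiprimeSubset_of_charFun (fun a => hne a a) hA hright⟩

theorem stmt_18 {H : Type*} [Nonempty H] (circ : H → H → Set H)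
    (hne : ∀ a b : H, (circ a b).Nonempty) (le : H → H → Prop)
    (A : Set H) (hA : A.Nonempty)
    (h : FuzzySemiprimeIdeal circ le (charFun A)) :
    IsSemiprimeIdeal circ le A :=
  stmt_18_general circ hne le A hA h
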